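/- arXiv:1706.00863 — 2 statements merged into one kernel-verified Lean document; each statement's English description precedes it below -/
import Mathlib

section
/- Let p be a prime, k > 0, n = p^k, and G = C_n(S) a non-empty circulant graph. Then for every i with 1 ≤ i ≤ n, the number f_{i-1} of independent sets of G of cardinality i is divisible by p. -/
/-- Circular distance on `ZMod n`. -/
def circDist (n : ℕ) (a b : ZMod n) : ℕ := min (a - b).val (b - a).val

/-- The circulant graph `C_n(S)`. -/
def circGraph (n : ℕ) (S : Set ℕ) : SimpleGraph (ZMod n) where
  Adj a b := a ≠ b ∧ circDist n a b ∈ S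
  symm := by
    constructor
    intro a b h
    exact ⟨h.1.symm, by simpa [circDist, min_comm] using h.2⟩
  loopless := by constructor; intro a h; exact h.1 rfl

/-- `A` is an independent set of `C_n(S)`. -/
def IsIndepSet' (n : ℕ) (S : Set ℕ) (A : Finset (ZMod n)) : Prop :=
  ∀ a ∈ A, ∀ b ∈ A, ¬ (circGraph n S).Adj a b

/-- `A` is a clique of `C_n(S)`. -/
def IsClique' (n : ℕ) (S : Set ℕ) (A : Finset (ZMod n)) : Prop :=
  ∀ a ∈ A, ∀ b ∈ A, a ≠ b → (circGraph n S).Adj a b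

/-- The number of independent sets of cardinality `i` (this is `f_{i-1}`). -/
noncomputable def indepCount (n : ℕ) (S : Set ℕ) (i : ℕ) : ℕ :=
  Nat.card {A : Finset (ZMod n) // A.card = i ∧ IsIndepSet' n S A}

/-- The number of cliques of cardinality `i`. -/
noncomputable def cliqueCount (n : ℕ) (S : Set ℕ) (i : ℕ) : ℕ :=
  Nat.card {A : Finset (ZMod n) // A.card = i ∧ IsClique' n S A}

/-- The reduced Euler characteristic of the independence complex of `C_n(S)`. -/
noncomputable def redEuler (n : ℕ) (S : Set ℕ) : ℤ :=
  ∑ i ∈ Finset.range (n + 1), (-1) ^ (i + 1) * (indepCount n S i : ℤ)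

/-!
Translation by `ZMod n` preserves the circulant graph, so the additive group `ZMod (p ^ k)`, a
`p`-group, acts on the independent sets of size `i`. The number of them is therefore congruent
mod `p` to the number of translation-invariant ones. A nonempty translation-invariant set is all
of `ZMod n`, which is not independent as soon as `S` contains some `1 ≤ s ≤ n / 2`.
-/

open Pointwise MulAction

theorem IsPGroup.dvd_card_of_fixedPoints_eq_empty {p : ℕ} [Fact p.Prime] {G α : Type*} [Group G]
    [MulAction G α] [Finite α] (hG : IsPGroup p G) (h : fixedPoints G α = ∅) :
    p ∣ Nat.card α := by
  simpa [h, Nat.modEq_zero_iff_dvd] using hG.card_modEq_card_fixedPoints α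

theorem Finset.eq_univ_of_forall_vadd_eq {G : Type*} [AddGroup G] [Fintype G] [DecidableEq G]
    {A : Finset G} (hA : A.Nonempty) (h : ∀ g : G, g +ᵥ A = A) : A = Finset.univ := by
  obtain ⟨a, ha⟩ := hA
  refine Finset.eq_univ_of_forall fun b => ?_
  rw [← h (b - a)]
  exact Finset.mem_vadd_finset.mpr ⟨a, ha, by simp⟩

section Circulant

variable {n : ℕ} {S : Set ℕ}

lemma circDist_add_left (g a b : ZMod n) : circDist n (g + a) (g + b) = circDist n a b := by
  simp [circDist]

lemma circGraph_adj_add_left {g a b : ZMod n} :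
    (circGraph n S).Adj (g + a) (g + b) ↔ (circGraph n S).Adj a b := by
  simp [circGraph, circDist_add_left]

lemma IsIndepSet'.vadd {A : Finset (ZMod n)} (hA : IsIndepSet' n S A) (g : ZMod n) :
    IsIndepSet' n S (g +ᵥ A) := by
  simp only [IsIndepSet', Finset.mem_vadd_finset, vadd_eq_add]
  rintro _ ⟨a, ha, rfl⟩ _ ⟨b, hb, rfl⟩
  rw [circGraph_adj_add_left]
  exact hA a ha b hb

lemma circGraph_adj_natCast_zero {s : ℕ} (hs : s ∈ S) (hs1 : 1 ≤ s) (hs2 : s ≤ n / 2) :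
    (circGraph n S).Adj (s : ZMod n) 0 := by
  have hsn : s < n := hs2.trans_lt (Nat.div_lt_self (by omega) one_lt_two)
  have hne : (s : ZMod n) ≠ 0 := by
    rw [Ne, ZMod.natCast_eq_zero_iff]
    exact Nat.not_dvd_of_pos_of_lt hs1 hsn
  have : NeZero n := ⟨by omega⟩
  have : NeZero (s : ZMod n) := ⟨hne⟩
  have hval : (s : ZMod n).val = s := ZMod.val_cast_of_lt hsn
  have hdist : circDist n (s : ZMod n) 0 = s := by
    rw [circDist, sub_zero, zero_sub, ZMod.val_neg_of_ne_zero, hval]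
    omega
  exact ⟨hne, by rwa [hdist]⟩

lemma not_isIndepSet'_univ [NeZero n] (hS : S ⊆ Set.Icc 1 (n / 2)) (hSne : S.Nonempty) :
    ¬ IsIndepSet' n S Finset.univ := by
  obtain ⟨s, hs⟩ := hSne
  exact fun hA => hA _ (Finset.mem_univ _) 0 (Finset.mem_univ _)
    (circGraph_adj_natCast_zero hs (hS hs).1 (hS hs).2)

variable (n S) in
def indepSetsOfCard (i : ℕ) : SubMulAction (Multiplicative (ZMod n)) (Finset (ZMod n)) where
  carrier := {A | A.card = i ∧ IsIndepSet' n S A}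
  smul_mem' _ _ hA := ⟨(Finset.card_vadd_finset _ _).trans hA.1, hA.2.vadd _⟩

lemma fixedPoints_indepSetsOfCard_eq_empty [NeZero n] (hS : S ⊆ Set.Icc 1 (n / 2))
    (hSne : S.Nonempty) {i : ℕ} (hi : 1 ≤ i) :
    fixedPoints (Multiplicative (ZMod n)) (indepSetsOfCard n S i) = ∅ := by
  refine Set.eq_empty_of_forall_notMem fun ⟨A, hcard, hindep⟩ hfix => ?_
  have hinv (g : ZMod n) : g +ᵥ A = A :=
    congrArg Subtype.val (hfix (Multiplicative.ofAdd g))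
  have hne : A.Nonempty := Finset.card_pos.mp (hcard ▸ hi)
  exact not_isIndepSet'_univ hS hSne (Finset.eq_univ_of_forall_vadd_eq hne hinv ▸ hindep)

end Circulant

theorem stmt4_general (p k n : ℕ) (hp : p.Prime) (hn : n = p ^ k)
    (S : Set ℕ) (hS : S ⊆ Set.Icc 1 (n / 2)) (hSne : S.Nonempty)
    (i : ℕ) (hi1 : 1 ≤ i) :
    p ∣ indepCount n S i := by
  have : Fact p.Prime := ⟨hp⟩
  have : NeZero n := ⟨hn ▸ pow_ne_zero k hp.ne_zero⟩
  have hG : IsPGroup p (Multiplicative (ZMod n)) :=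
    IsPGroup.of_card (n := k) (by rw [← hn]; exact Nat.card_zmod n)
  exact hG.dvd_card_of_fixedPoints_eq_empty (α := indepSetsOfCard n S i)
    (fixedPoints_indepSetsOfCard_eq_empty hS hSne hi1)

theorem stmt4 (p k n : ℕ) (hp : p.Prime) (hk : 0 < k) (hn : n = p ^ k)
    (S : Set ℕ) (hS : S ⊆ Set.Icc 1 (n / 2)) (hSne : S.Nonempty)
    (i : ℕ) (hi1 : 1 ≤ i) (hi2 : i ≤ n) :
    p ∣ indepCount n S i :=
  stmt4_general p k n hp hn S hS hSne i hi1
end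

section
/- Let p be an odd prime, k > 0, n = 2p^k, and let G = C_n(S) be a non-complete circulant graph with 1 ∉ S that contains a clique of cardinality p^k. Then G has exactly two cliques of cardinality p^k, namely the set of even vertices and the set of odd vertices. -/
/-!
A clique of size `p ^ k` in `C_{2p^k}(S)` with `1 ∉ S` never contains two consecutive vertices,
so it is disjoint from its translate by `1`; having half of all vertices, its translate is exactly
its complement. Hence membership alternates along `0, 1, 2, …`, i.e. the clique is the set of even
or of odd vertices. Since the circular distance of two vertices has the parity of their difference,
the existence of one such clique forces every even distance into `S`, so both parity classes are
cliques.
-/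

def IsParityClass {n : ℕ} (V : Finset (ZMod n)) : Prop :=
  (∀ v : ZMod n, v ∈ V ↔ Even v.val) ∨ (∀ v : ZMod n, v ∈ V ↔ ¬ Even v.val)

namespace Finset

variable {G : Type*} [AddGroup G] [Fintype G] [DecidableEq G] {V : Finset G} {c : G}

theorem mem_iff_add_notMem_of_two_mul_card_eq (hV : 2 * V.card = Fintype.card G)
    (h : ∀ a ∈ V, a + c ∉ V) (a : G) : a ∈ V ↔ a + c ∉ V := by
  have himage : V.image (· + c) = Vᶜ := by
    refine eq_of_subset_of_card_le ?_ ?_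
    · intro x hx
      obtain ⟨a, ha, rfl⟩ := mem_image.1 hx
      exact mem_compl.2 (h a ha)
    · rw [card_compl, card_image_of_injective _ (add_left_injective c)]
      omega
  refine ⟨h a, fun ha => ?_⟩
  obtain ⟨b, hb, hba⟩ := mem_image.1 (himage ▸ mem_compl.2 ha)
  exact add_left_injective c hba ▸ hb

theorem two_mul_card_eq_of_mem_iff_add_notMem (h : ∀ a, a ∈ V ↔ a + c ∉ V) :
    2 * V.card = Fintype.card G := by
  have himage : V.image (· + c) = Vᶜ := by
    ext x
    rw [mem_image, mem_compl]
    constructor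
    · rintro ⟨a, ha, rfl⟩
      exact (h a).1 ha
    · intro hx
      exact ⟨x - c, (h _).2 (by rwa [sub_add_cancel]), sub_add_cancel x c⟩
  have hcard := congrArg card himage
  rw [card_compl, card_image_of_injective _ (add_left_injective c)] at hcard
  have := V.card_le_univ
  omega

end Finset

namespace ZMod

variable {n : ℕ} [NeZero n]

theorem even_val_iff_castHom_eq_zero (h : 2 ∣ n) (a : ZMod n) :
    Even a.val ↔ castHom h (ZMod 2) a = 0 := by
  rw [castHom_apply, cast_eq_val, natCast_eq_zero_iff_even]

theorem even_val_add_one_iff (h : 2 ∣ n) (a : ZMod n) : Even (a + 1).val ↔ ¬ Even a.val := by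
  rw [even_val_iff_castHom_eq_zero h, even_val_iff_castHom_eq_zero h, map_add, map_one]
  generalize castHom h (ZMod 2) a = x
  revert x
  decide

end ZMod

@[simp]
theorem circDist_self {n : ℕ} (a : ZMod n) : circDist n a a = 0 := by
  simp [circDist]

section CircDist

variable {n : ℕ} [NeZero n]

theorem circDist_eq_natAbs_valMinAbs (a b : ZMod n) :
    circDist n a b = (a - b).valMinAbs.natAbs := by
  rw [ZMod.valMinAbs_natAbs_eq_min, circDist, ← neg_sub a b, ZMod.neg_val]
  split_ifs with h
  · simp [h]
  · rfl

theorem circDist_le_half (a b : ZMod n) : circDist n a b ≤ n / 2 :=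
  circDist_eq_natAbs_valMinAbs a b ▸ ZMod.natAbs_valMinAbs_le _

theorem circDist_pos {a b : ZMod n} (hab : a ≠ b) : 0 < circDist n a b := by
  rw [circDist_eq_natAbs_valMinAbs, Int.natAbs_pos, Ne, ZMod.valMinAbs_eq_zero, sub_eq_zero]
  exact hab

theorem circDist_add_natCast_self (a : ZMod n) {d : ℕ} (hd : d ≤ n / 2) :
    circDist n (a + d) a = d := by
  rw [circDist_eq_natAbs_valMinAbs, add_sub_cancel_left, ZMod.valMinAbs_natCast_of_le_half hd,
    Int.natAbs_natCast]

theorem even_circDist_iff (h : 2 ∣ n) (a b : ZMod n) :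
    Even (circDist n a b) ↔ (Even a.val ↔ Even b.val) := by
  rw [circDist_eq_natAbs_valMinAbs, Int.natAbs_even, ← ZMod.intCast_eq_zero_iff_even,
    ZMod.even_val_iff_castHom_eq_zero h, ZMod.even_val_iff_castHom_eq_zero h,
    ← map_intCast (ZMod.castHom h (ZMod 2)), ZMod.coe_valMinAbs, map_sub, sub_eq_zero]
  generalize ZMod.castHom h (ZMod 2) a = x
  generalize ZMod.castHom h (ZMod 2) b = y
  revert x y
  decide

end CircDist

namespace IsParityClass

variable {n : ℕ} [NeZero n] {V : Finset (ZMod n)}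

theorem mem_iff_add_one_notMem (h : 2 ∣ n) (hV : IsParityClass V) (a : ZMod n) :
    a ∈ V ↔ a + 1 ∉ V := by
  rcases hV with hV | hV <;> simp only [hV, ZMod.even_val_add_one_iff h, not_not]

theorem mem_iff_even_circDist (h : 2 ∣ n) (hV : IsParityClass V) {a : ZMod n} (ha : a ∈ V)
    (b : ZMod n) : b ∈ V ↔ Even (circDist n b a) := by
  rw [even_circDist_iff h]
  rcases hV with hV | hV <;> simp only [hV] at ha ⊢ <;> tauto

end IsParityClass

theorem isParityClass_of_mem_iff_add_one_notMem {n : ℕ} [NeZero n] {V : Finset (ZMod n)}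
    (h : ∀ a : ZMod n, a ∈ V ↔ a + 1 ∉ V) : IsParityClass V := by
  have hnat : ∀ j : ℕ, (j : ZMod n) ∈ V ↔ (0 ∈ V ↔ Even j) := by
    intro j
    induction j with
    | zero => simp
    | succ j ih =>
      rw [Nat.cast_succ, Nat.even_add_one]
      have := h j
      tauto
  have hval : ∀ v : ZMod n, v ∈ V ↔ (0 ∈ V ↔ Even v.val) := fun v => by
    rw [← hnat, ZMod.natCast_zmod_val]
  by_cases h0 : (0 : ZMod n) ∈ V
  · exact Or.inl fun v => by simpa [h0] using hval v
  · exact Or.inr fun v => by simpa [h0] using hval v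

section CirculantHalf

variable {m : ℕ} [NeZero m] {S : Set ℕ} {V : Finset (ZMod (2 * m))}

theorem IsParityClass.card (hV : IsParityClass V) : V.card = m := by
  have := Finset.two_mul_card_eq_of_mem_iff_add_notMem (hV.mem_iff_add_one_notMem (dvd_mul_right 2 m))
  rw [ZMod.card] at this
  omega

theorem IsParityClass.isClique' (hS : ∀ d, Even d → 0 < d → d ≤ m → d ∈ S)
    (hV : IsParityClass V) : IsClique' (2 * m) S V := by
  intro a ha b hb hab
  refine ⟨hab, hS _ ?_ (circDist_pos hab) ?_⟩
  · exact (hV.mem_iff_even_circDist (dvd_mul_right 2 m) hb a).1 ha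
  · simpa using circDist_le_half (n := 2 * m) a b

theorem IsParityClass.even_mem_of_isClique' (hV : IsParityClass V) (hne : V.Nonempty)
    (hq : IsClique' (2 * m) S V) (d : ℕ) (hd : Even d) (hd0 : 0 < d) (hdm : d ≤ m) : d ∈ S := by
  obtain ⟨v, hv⟩ := hne
  have hdist : circDist (2 * m) (v + d) v = d := circDist_add_natCast_self v (by omega)
  have hmem : v + d ∈ V := (hV.mem_iff_even_circDist (dvd_mul_right 2 m) hv _).2 (by rwa [hdist])
  have hne : v + d ≠ v := fun h => by rw [h, circDist_self] at hdist; omega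
  exact hdist ▸ (hq _ hmem v hv hne).2

theorem IsClique'.isParityClass (h1 : 1 ∉ S) (hcard : V.card = m) (hV : IsClique' (2 * m) S V) :
    IsParityClass V := by
  have hsucc : ∀ a ∈ V, a + 1 ∉ V := fun a ha ha1 => by
    have hdist : circDist (2 * m) (a + 1) a = 1 := by
      simpa using circDist_add_natCast_self (n := 2 * m) a (d := 1) (by simp [NeZero.one_le])
    have hne : a + 1 ≠ a := fun h => by simp [h] at hdist
    exact h1 (hdist ▸ (hV _ ha1 a ha hne).2)
  refine isParityClass_of_mem_iff_add_one_notMem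
    (Finset.mem_iff_add_notMem_of_two_mul_card_eq ?_ hsucc)
  rw [ZMod.card, hcard]

end CirculantHalf

theorem stmt11_general (p k n : ℕ) (hp : p.Prime)
    (hn : n = 2 * p ^ k) (S : Set ℕ) (h1 : 1 ∉ S)
    (hex : ∃ V : Finset (ZMod n), V.card = p ^ k ∧ IsClique' n S V) :
    ∀ V : Finset (ZMod n), (V.card = p ^ k ∧ IsClique' n S V) ↔
      ((∀ v : ZMod n, v ∈ V ↔ Even v.val) ∨ (∀ v : ZMod n, v ∈ V ↔ ¬ Even v.val)) := by
  subst hn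
  have : NeZero (p ^ k) := ⟨pow_ne_zero k hp.ne_zero⟩
  obtain ⟨V₀, hV₀card, hV₀⟩ := hex
  have hV₀par : IsParityClass V₀ := hV₀.isParityClass h1 hV₀card
  have hV₀ne : V₀.Nonempty := Finset.card_pos.1 (by rw [hV₀card]; exact NeZero.pos _)
  have hS := hV₀par.even_mem_of_isClique' hV₀ne hV₀
  exact fun V => ⟨fun ⟨hcard, hV⟩ => hV.isParityClass h1 hcard,
    fun hV => ⟨IsParityClass.card hV, IsParityClass.isClique' hS hV⟩⟩

theorem stmt11 (p k n : ℕ) (hp : p.Prime) (hodd : Odd p) (hk : 0 < k)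
    (hn : n = 2 * p ^ k) (S : Set ℕ) (hS : S ⊆ Set.Icc 1 (p ^ k))
    (hne : S ≠ Set.Icc 1 (p ^ k)) (h1 : 1 ∉ S)
    (hex : ∃ V : Finset (ZMod n), V.card = p ^ k ∧ IsClique' n S V) :
    ∀ V : Finset (ZMod n), (V.card = p ^ k ∧ IsClique' n S V) ↔
      ((∀ v : ZMod n, v ∈ V ↔ Even v.val) ∨ (∀ v : ZMod n, v ∈ V ↔ ¬ Even v.val)) :=
  stmt11_general p k n hp hn S h1 hex
end
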